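/- Let K be a field, m ≥ 1, σ = σ1 + σ2 with σ1, σ2 ≥ 1, let J ∈ K^{σ×σ} be block upper triangular J = [[J1, J'],[0, J2]] with J1 ∈ K^{σ1×σ1}, J2 ∈ K^{σ2×σ2}, let E ∈ K^{m×σ}, let E1 be its first σ1 columns, and let s ∈ ℤ^m. Suppose P1 ∈ K[X]^{m×m} is an interpolation basis for (E1,J1) in s-Popov form with column degree δ1, let E2 be the last σ2 columns of P1·E, and suppose P2 ∈ K[X]^{m×m} is an interpolation basis for (E2,J2) in (s+δ1)-Popov form with column degree δ2. Then any interpolation basis for (E,J) which is in s-Popov form has column degree δ1 + δ2. -/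

import Mathlib

open Polynomial Matrix

/-- Degree of a polynomial as an element of `WithBot ℤ`, with `degZ 0 = ⊥`. -/
noncomputable def degZ {K : Type*} [Field K] (p : Polynomial K) : WithBot ℤ :=
  p.degree.map (fun n : ℕ => (n : ℤ))

/-- The `s`-degree of a row vector `p`: `max_j (deg p_j + s_j)`. -/
noncomputable def sdeg {K : Type*} [Field K] {ι : Type*} [Fintype ι]
    (s : ι → ℤ) (p : ι → Polynomial K) : WithBot ℤ :=
  Finset.univ.sup fun j => degZ (p j) + (s j : WithBot ℤ)

/-- `j` is the `s`-pivot index of the row `p`: the largest index at which the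
`s`-degree of `p` is attained. -/
def IsPivotIndex {K : Type*} [Field K] {ι : Type*} [Fintype ι] [LinearOrder ι]
    (s : ι → ℤ) (p : ι → Polynomial K) (j : ι) : Prop :=
  degZ (p j) + (s j : WithBot ℤ) = sdeg s p ∧
    ∀ k, j < k → degZ (p k) + (s k : WithBot ℤ) ≠ sdeg s p

/-- `P` is in `s`-Popov form: it is nonsingular, the `s`-pivot entries are monic and
on the diagonal, and in each column the nonpivot entries have degree less than
the pivot entry. -/
def IsPopov {K : Type*} [Field K] {m : ℕ} (s : Fin m → ℤ)
    (P : Matrix (Fin m) (Fin m) (Polynomial K)) : Prop :=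
  P.det ≠ 0 ∧ (∀ i, IsPivotIndex s (P i) i) ∧ (∀ i, (P i i).Monic) ∧
    ∀ i j, i ≠ j → (P i j).degree < (P j j).degree

/-- `p` is an interpolant for `(E, J)`: `∑ i, (row i of E) ⋅ (p i)(J) = 0`. -/
def IsInterpolant {K : Type*} [Field K] {ι n : Type*} [Fintype ι] [Fintype n] [DecidableEq n]
    (E : Matrix ι n K) (J : Matrix n n K) (p : ι → Polynomial K) : Prop :=
  ∑ i, Matrix.vecMul (E i) (Polynomial.aeval J (p i)) = 0

/-- `P` is an interpolation basis for `(E, J)`: its rows form a basis of the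
`K[X]`-module of interpolants for `(E, J)`. -/
def IsInterpolationBasis {K : Type*} [Field K] {ι n : Type*} [Fintype ι] [Fintype n]
    [DecidableEq n] (E : Matrix ι n K) (J : Matrix n n K)
    (P : Matrix ι ι (Polynomial K)) : Prop :=
  LinearIndependent (Polynomial K) (fun i => P i) ∧
    (Submodule.span (Polynomial K) (Set.range fun i => P i) : Set (ι → Polynomial K))
      = {p | IsInterpolant E J p}

/-- The product `Q ⋅ E`: the matrix over `K` whose `i`-th row is `∑ j, (E j) ⋅ (Q i j)(J)`. -/
noncomputable def polMulMat {K : Type*} [Field K] {κ ι n : Type*} [Fintype κ] [Fintype ι]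
    [Fintype n] [DecidableEq n]
    (Q : Matrix κ ι (Polynomial K)) (E : Matrix ι n K) (J : Matrix n n K) : Matrix κ n K :=
  fun i => ∑ j, Matrix.vecMul (E j) (Polynomial.aeval J (Q i j))

/-- The `s`-leading matrix of `R`: if row `i` has `s`-degree `d`, its `(i,j)` entry is
the coefficient of degree `d - s j` in `R i j` (and `0` if row `i` is zero). -/
noncomputable def leadingMatrix {K : Type*} [Field K] {ι : Type*} [Fintype ι]
    (s : ι → ℤ) (R : Matrix ι ι (Polynomial K)) : Matrix ι ι K := fun i j =>
  WithBot.recBotCoe 0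
    (fun d => if 0 ≤ d - s j then (R i j).coeff (d - s j).toNat else 0)
    (sdeg s (R i))

/-!
Since `J` is block upper triangular, an interpolant for `(E, J)` is one for `(E₁, J₁)`, hence of
the form `v P1`; and `v P1` is an interpolant for `(E, J)` iff `v` is one for `(E₂, J₂)`, because
`(v P1) · E = v · (P1 · E)` and `P1 · E` vanishes on the first `σ1` columns. So the rows of
`P2 P1` span the interpolants for `(E, J)`. By the predictable degree property, `P2 P1` is in
`s`-weak Popov form with its pivots on the diagonal, of degrees `δ1 + δ2`; and any two such
matrices with the same row module have the same pivot degrees, which applies to `Q`.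
-/

section Degree

variable {K : Type*} [Field K]

lemma degZ_eq_bot {p : K[X]} : degZ p = ⊥ ↔ p = 0 := by
  simp [degZ, degree_eq_bot]

lemma degZ_of_ne_zero {p : K[X]} (hp : p ≠ 0) : degZ p = (p.natDegree : ℤ) := by
  rw [degZ, degree_eq_natDegree hp]
  rfl

lemma degZ_mul (p q : K[X]) : degZ (p * q) = degZ p + degZ q := by
  by_cases hp : p = 0
  · simp [hp, degZ]
  by_cases hq : q = 0
  · simp [hq, degZ]
  rw [degZ_of_ne_zero (mul_ne_zero hp hq), degZ_of_ne_zero hp, degZ_of_ne_zero hq,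
    natDegree_mul hp hq]
  norm_cast

lemma degZ_le_degZ_iff {p q : K[X]} : degZ p ≤ degZ q ↔ p.degree ≤ q.degree :=
  WithBot.map_le_iff _ Nat.cast_le

lemma degZ_add_le (p q : K[X]) : degZ (p + q) ≤ max (degZ p) (degZ q) := by
  rcases le_total p.degree q.degree with h | h
  · exact (degZ_le_degZ_iff.2 ((degree_add_le p q).trans (max_eq_right h).le)).trans
      (le_max_right _ _)
  · exact (degZ_le_degZ_iff.2 ((degree_add_le p q).trans (max_eq_left h).le)).trans
      (le_max_left _ _)

lemma degZ_add_eq_left {p q : K[X]} (h : degZ q < degZ p) : degZ (p + q) = degZ p := by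
  rw [degZ, degree_add_eq_left_of_degree_lt (lt_of_not_ge (mt degZ_le_degZ_iff.2 h.not_ge))]
  rfl

variable {α : Type*} {t : Finset α} {f : α → K[X]} {c : ℤ} {D : WithBot ℤ}

lemma degZ_sum_add_le (h : ∀ j ∈ t, degZ (f j) + c ≤ D) : degZ (∑ j ∈ t, f j) + c ≤ D :=
  Finset.sum_induction f (fun p => degZ p + c ≤ D)
    (fun p q hp hq => (add_le_add_left (degZ_add_le p q) _).trans
      ((max_add_add_right _ _ _).symm.trans_le (max_le hp hq)))
    (by simp [degZ]) h

lemma degZ_sum_add_lt (hD : ⊥ < D) (h : ∀ j ∈ t, degZ (f j) + c < D) :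
    degZ (∑ j ∈ t, f j) + c < D :=
  Finset.sum_induction f (fun p => degZ p + c < D)
    (fun p q hp hq => (add_le_add_left (degZ_add_le p q) _).trans_lt
      ((max_add_add_right _ _ _).symm.trans_lt (max_lt hp hq)))
    (by simpa [degZ] using hD) h

lemma degZ_sum_add_eq [DecidableEq α] {a : α} (ha : a ∈ t) (hD : ⊥ < D)
    (hfa : degZ (f a) + c = D) (h : ∀ j ∈ t, j ≠ a → degZ (f j) + c < D) :
    degZ (∑ j ∈ t, f j) + c = D := by
  have hrest : degZ (∑ j ∈ t.erase a, f j) + c < degZ (f a) + c :=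
    hfa ▸ degZ_sum_add_lt hD fun j hj => h j (Finset.mem_of_mem_erase hj) (Finset.ne_of_mem_erase hj)
  rw [← Finset.add_sum_erase t f ha,
    degZ_add_eq_left ((WithBot.add_lt_add_iff_right WithBot.coe_ne_bot).1 hrest), hfa]

end Degree

section Pivots

variable {K : Type*} [Field K] {ι : Type*} [Fintype ι] [LinearOrder ι]

lemma isPivotIndex_iff {s : ι → ℤ} {p : ι → K[X]} {j : ι} :
    IsPivotIndex s p j ↔ (∀ k, degZ (p k) + s k ≤ degZ (p j) + s j) ∧
      ∀ k, j < k → degZ (p k) + s k < degZ (p j) + s j := by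
  refine ⟨fun ⟨hj, hgt⟩ => ⟨fun k => ?_, fun k hk => ?_⟩, fun ⟨hle, hlt⟩ => ?_⟩
  · exact hj ▸ Finset.le_sup (f := fun k => degZ (p k) + s k) (Finset.mem_univ k)
  · exact hj ▸ lt_of_le_of_ne (Finset.le_sup (f := fun k => degZ (p k) + s k)
      (Finset.mem_univ k)) (hgt k hk)
  · have hj : degZ (p j) + s j = sdeg s p :=
      le_antisymm (Finset.le_sup (f := fun k => degZ (p k) + s k) (Finset.mem_univ j))
        (Finset.sup_le fun k _ => hle k)
    exact ⟨hj, fun k hk => hj ▸ (hlt k hk).ne⟩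

lemma IsPivotIndex.unique {s : ι → ℤ} {p : ι → K[X]} {i j : ι} (hi : IsPivotIndex s p i)
    (hj : IsPivotIndex s p j) : i = j := by
  by_contra hne
  rcases lt_or_gt_of_ne hne with h | h
  · exact hi.2 j h hj.1
  · exact hj.2 i h hi.1

lemma exists_isPivotIndex [Nonempty ι] (s : ι → ℤ) (p : ι → K[X]) : ∃ j, IsPivotIndex s p j := by
  obtain ⟨j, -, hj⟩ := Finset.exists_max_image Finset.univ
    (fun k => toLex (degZ (p k) + s k, k)) Finset.univ_nonempty
  refine ⟨j, isPivotIndex_iff.2 ⟨fun k => ?_, fun k hk => ?_⟩⟩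
  · exact (Prod.Lex.toLex_le_toLex'.1 (hj k (Finset.mem_univ k))).1
  · obtain ⟨hle, hlex⟩ := Prod.Lex.toLex_le_toLex'.1 (hj k (Finset.mem_univ k))
    exact lt_of_le_of_ne hle fun heq => (hlex heq).not_gt hk

lemma IsPivotIndex.ne_zero {s : ι → ℤ} {p : ι → K[X]} {j : ι} (h : IsPivotIndex s p j)
    (hp : p ≠ 0) : p j ≠ 0 := by
  intro hpj
  obtain ⟨k, hk⟩ := Function.ne_iff.1 hp
  have := (isPivotIndex_iff.1 h).1 k
  rw [hpj, degZ_eq_bot.2 rfl, WithBot.bot_add, le_bot_iff, WithBot.add_eq_bot,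
    degZ_eq_bot] at this
  exact hk (this.resolve_right WithBot.coe_ne_bot)

end Pivots

section DiagonalPivots

variable {K : Type*} [Field K] {ι : Type*} [Fintype ι] [LinearOrder ι]

/-- `R` is in `s`-weak Popov form, with diagonal pivots of degrees `d`. -/
def HasDiagonalPivots (s d : ι → ℤ) (R : Matrix ι ι K[X]) : Prop :=
  ∀ j, IsPivotIndex s (R j) j ∧ degZ (R j j) = d j

lemma IsPopov.hasDiagonalPivots {m : ℕ} {s : Fin m → ℤ} {R : Matrix (Fin m) (Fin m) K[X]}
    (h : IsPopov s R) : HasDiagonalPivots s (fun j => ((R j j).natDegree : ℤ)) R :=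
  fun j => ⟨h.2.1 j, degZ_of_ne_zero (h.2.2.1 j).ne_zero⟩

namespace HasDiagonalPivots

variable {s d : ι → ℤ} {R : Matrix ι ι K[X]}

lemma ne_zero (hR : HasDiagonalPivots s d R) (j : ι) : R j j ≠ 0 := fun h =>
  WithBot.coe_ne_bot ((hR j).2.symm.trans (degZ_eq_bot.2 h))

lemma natDegree_eq (hR : HasDiagonalPivots s d R) (j : ι) : ((R j j).natDegree : ℤ) = d j :=
  WithBot.coe_injective ((degZ_of_ne_zero (hR.ne_zero j)).symm.trans (hR j).2)

lemma degZ_add_le (hR : HasDiagonalPivots s d R) (j k : ι) :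
    degZ (R j k) + s k ≤ d j + s j :=
  (hR j).2 ▸ (isPivotIndex_iff.1 (hR j).1).1 k

lemma degZ_add_lt (hR : HasDiagonalPivots s d R) {j k : ι} (hjk : j < k) :
    degZ (R j k) + s k < d j + s j :=
  (hR j).2 ▸ (isPivotIndex_iff.1 (hR j).1).2 k hjk

/-- Predictable degree property: the `s`-pivot of `u ⬝ R` is the `(s + d)`-pivot of `u`. -/
lemma isPivotIndex_vecMul (hR : HasDiagonalPivots s d R) {u : ι → K[X]} {i : ι}
    (hu : IsPivotIndex (fun j => s j + d j) u i) (hui : u i ≠ 0) :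
    IsPivotIndex s (u ᵥ* R) i ∧ degZ ((u ᵥ* R) i) = degZ (u i) + d i := by
  obtain ⟨hule, hult⟩ := isPivotIndex_iff.1 hu
  have hD : ⊥ < degZ (u i) + ↑(s i + d i) := by
    rw [degZ_of_ne_zero hui, ← WithBot.coe_add]
    exact WithBot.bot_lt_coe _
  set D : WithBot ℤ := degZ (u i) + ↑(s i + d i)
  have hshift : ∀ j, degZ (u j) + ↑(s j + d j) = degZ (u j) + (d j + s j) := fun j => by
    rw [WithBot.coe_add, add_comm (s j : WithBot ℤ)]
  have hterm_le : ∀ j k, degZ (u j * R j k) + s k ≤ degZ (u j) + ↑(s j + d j) := fun j k => by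
    rw [degZ_mul, add_assoc, hshift]
    exact add_le_add_right (hR.degZ_add_le j k) _
  have hterm_lt : ∀ j k, j < k ∨ i < j → degZ (u j * R j k) + s k < D := by
    rintro j k (hjk | hij)
    · by_cases huj : u j = 0
      · simpa [huj, degZ] using hD
      refine lt_of_lt_of_le ?_ (hule j)
      rw [degZ_mul, add_assoc, hshift]
      exact WithBot.add_lt_add_left (mt degZ_eq_bot.1 huj) (hR.degZ_add_lt hjk)
    · exact (hterm_le j k).trans_lt (hult j hij)
  have hpivot : degZ ((u ᵥ* R) i) + s i = D := by
    refine degZ_sum_add_eq (Finset.mem_univ i) hD ?_ fun j _ hji => hterm_lt j i ?_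
    · rw [degZ_mul, (hR i).2, add_assoc]
      exact (hshift i).symm
    · exact lt_or_gt_of_ne hji
  refine ⟨isPivotIndex_iff.2 ⟨fun k => ?_, fun k hik => ?_⟩, ?_⟩
  · exact hpivot ▸ degZ_sum_add_le fun j _ => (hterm_le j k).trans (hule j)
  · refine hpivot ▸ degZ_sum_add_lt hD fun j _ => hterm_lt j k ?_
    exact (lt_or_ge j k).imp_right hik.trans_le
  · have := hpivot.trans (hshift i)
    rw [← add_assoc] at this
    exact WithBot.add_right_cancel WithBot.coe_ne_bot this

lemma le_natDegree_of_isPivotIndex (hR : HasDiagonalPivots s d R) {u : ι → K[X]} {i : ι}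
    (hp : IsPivotIndex s (u ᵥ* R) i) (hpi : (u ᵥ* R) i ≠ 0) :
    d i ≤ ((u ᵥ* R) i).natDegree := by
  have hu : u ≠ 0 := by
    rintro rfl
    exact hpi (by simp)
  have : Nonempty ι := ⟨i⟩
  obtain ⟨j, hj⟩ := exists_isPivotIndex (fun j => s j + d j) u
  obtain ⟨hpj, hdeg⟩ := hR.isPivotIndex_vecMul hj (hj.ne_zero hu)
  obtain rfl := hpj.unique hp
  rw [degZ_of_ne_zero hpi, degZ_of_ne_zero (hj.ne_zero hu), ← WithBot.coe_add,
    WithBot.coe_inj] at hdeg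
  omega

lemma mul {d' : ι → ℤ} {R' : Matrix ι ι K[X]} (hR : HasDiagonalPivots s d R)
    (hR' : HasDiagonalPivots (fun j => s j + d j) d' R') :
    HasDiagonalPivots s (fun j => d j + d' j) (R' * R) := fun i => by
  obtain ⟨hpiv, hdeg⟩ := hR.isPivotIndex_vecMul (hR' i).1 (hR'.ne_zero i)
  refine ⟨hpiv, ?_⟩
  rw [show (R' * R) i i = (R' i ᵥ* R) i from rfl, hdeg, (hR' i).2, add_comm]
  rfl

lemma pivotDegrees_le {d' : ι → ℤ} {R' : Matrix ι ι K[X]} (hR : HasDiagonalPivots s d R)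
    (hR' : HasDiagonalPivots s d' R') (hrows : ∀ i, ∃ u, u ᵥ* R' = R i) : d' ≤ d := by
  intro i
  obtain ⟨u, hu⟩ := hrows i
  have := hR'.le_natDegree_of_isPivotIndex (hu ▸ (hR i).1) (hu ▸ hR.ne_zero i)
  rwa [hu, hR.natDegree_eq] at this

lemma pivotDegrees_eq {d' : ι → ℤ} {R' : Matrix ι ι K[X]} [DecidableEq ι]
    (hR : HasDiagonalPivots s d R) (hR' : HasDiagonalPivots s d' R')
    (hrows : ∀ p, (∃ u, u ᵥ* R = p) ↔ ∃ u, u ᵥ* R' = p) : d = d' :=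
  le_antisymm (hR'.pivotDegrees_le hR fun i => (hrows _).2 ⟨Pi.single i 1, single_one_vecMul _ _⟩)
    (hR.pivotDegrees_le hR' fun i => (hrows _).1 ⟨Pi.single i 1, single_one_vecMul _ _⟩)

end HasDiagonalPivots

end DiagonalPivots

section Interpolation

variable {K : Type*} [Field K] {ι κ n : Type*} [Fintype ι] [Fintype κ] [Fintype n] [DecidableEq n]

/-- The paper's `p · E`. -/
noncomputable def polVecMul (p : ι → K[X]) (E : Matrix ι n K) (J : Matrix n n K) : n → K :=
  ∑ i, E i ᵥ* aeval J (p i)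

lemma isInterpolant_iff_polVecMul_eq_zero {E : Matrix ι n K} {J : Matrix n n K} {p : ι → K[X]} :
    IsInterpolant E J p ↔ polVecMul p E J = 0 :=
  Iff.rfl

lemma polVecMul_vecMul (u : κ → K[X]) (P : Matrix κ ι K[X]) (E : Matrix ι n K)
    (J : Matrix n n K) : polVecMul (u ᵥ* P) E J = polVecMul u (polMulMat P E J) J := by
  simp only [polVecMul, polMulMat, sum_vecMul]
  rw [Finset.sum_comm]
  refine Finset.sum_congr rfl fun i _ => ?_
  simp only [vecMul_vecMul, ← vecMul_sum, ← map_mul, ← map_sum, mul_comm]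
  rfl

lemma IsInterpolationBasis.isInterpolant_iff {E : Matrix ι n K} {J : Matrix n n K}
    {P : Matrix ι ι K[X]} (h : IsInterpolationBasis E J P) {p : ι → K[X]} :
    IsInterpolant E J p ↔ ∃ u, u ᵥ* P = p := by
  rw [show IsInterpolant E J p ↔ p ∈ (Submodule.span K[X] (Set.range fun i => P i) : Set _) by
    rw [h.2]; rfl, SetLike.mem_coe, Submodule.mem_span_range_iff_exists_fun]
  simp only [vecMul_eq_sum]

end Interpolation

lemma exists_aeval_fromBlocks_zero {R : Type*} [CommRing R] {n₁ n₂ : Type*} [Fintype n₁]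
    [Fintype n₂] [DecidableEq n₁] [DecidableEq n₂] (A : Matrix n₁ n₁ R) (B : Matrix n₁ n₂ R)
    (D : Matrix n₂ n₂ R) (q : R[X]) :
    ∃ C, aeval (fromBlocks A B 0 D) q = fromBlocks (aeval A q) C 0 (aeval D q) := by
  induction q using Polynomial.induction_on' with
  | add p q hp hq =>
    obtain ⟨C₁, hC₁⟩ := hp
    obtain ⟨C₂, hC₂⟩ := hq
    exact ⟨C₁ + C₂, by simp [hC₁, hC₂, fromBlocks_add]⟩
  | monomial k a =>
    have hpow : ∀ k : ℕ, ∃ C, fromBlocks A B 0 D ^ k = fromBlocks (A ^ k) C 0 (D ^ k) := by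
      intro k
      induction k with
      | zero => exact ⟨0, by simp [fromBlocks_one]⟩
      | succ k ih =>
        obtain ⟨C, hC⟩ := ih
        exact ⟨A ^ k * B + C * D, by simp [pow_succ, hC, fromBlocks_multiply]⟩
    obtain ⟨C, hC⟩ := hpow k
    refine ⟨a • C, ?_⟩
    simp only [aeval_monomial, Algebra.algebraMap_eq_smul_one, smul_one_mul, hC, fromBlocks_smul,
      smul_zero]

section Blocks

variable {K : Type*} [Field K] {ι n₁ n₂ : Type*} [Fintype ι] [Fintype n₁] [Fintype n₂]
  [DecidableEq n₁] [DecidableEq n₂] (J₁ : Matrix n₁ n₁ K) (J' : Matrix n₁ n₂ K)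
  (J₂ : Matrix n₂ n₂ K) {E : Matrix ι (n₁ ⊕ n₂) K}

lemma polVecMul_fromBlocks_comp_inl (p : ι → K[X]) (E : Matrix ι (n₁ ⊕ n₂) K) :
    polVecMul p E (fromBlocks J₁ J' 0 J₂) ∘ Sum.inl = polVecMul p (E.submatrix id Sum.inl) J₁ := by
  funext b
  simp only [polVecMul, Function.comp_apply, Finset.sum_apply]
  refine Finset.sum_congr rfl fun i _ => ?_
  obtain ⟨C, hC⟩ := exists_aeval_fromBlocks_zero J₁ J' J₂ (p i)
  rw [hC, vecMul_fromBlocks, vecMul_zero, add_zero]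
  rfl

lemma polVecMul_fromBlocks_comp_inr (hE : E.submatrix id Sum.inl = 0) (p : ι → K[X]) :
    polVecMul p E (fromBlocks J₁ J' 0 J₂) ∘ Sum.inr = polVecMul p (E.submatrix id Sum.inr) J₂ := by
  funext b
  simp only [polVecMul, Function.comp_apply, Finset.sum_apply]
  refine Finset.sum_congr rfl fun i _ => ?_
  obtain ⟨C, hC⟩ := exists_aeval_fromBlocks_zero J₁ J' J₂ (p i)
  have hEi : E i ∘ Sum.inl = 0 := congrFun hE i
  rw [hC, vecMul_fromBlocks, hEi, Sum.elim_inr, zero_vecMul, zero_add]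
  rfl

variable {J₁ J' J₂}

lemma IsInterpolant.submatrix_inl {p : ι → K[X]} (h : IsInterpolant E (fromBlocks J₁ J' 0 J₂) p) :
    IsInterpolant (E.submatrix id Sum.inl) J₁ p := by
  rw [isInterpolant_iff_polVecMul_eq_zero, ← polVecMul_fromBlocks_comp_inl J₁ J' J₂,
    isInterpolant_iff_polVecMul_eq_zero.1 h]
  rfl

lemma isInterpolant_fromBlocks_iff (hE : E.submatrix id Sum.inl = 0) {p : ι → K[X]} :
    IsInterpolant E (fromBlocks J₁ J' 0 J₂) p ↔ IsInterpolant (E.submatrix id Sum.inr) J₂ p := by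
  have hinl : polVecMul p E (fromBlocks J₁ J' 0 J₂) ∘ Sum.inl = 0 := by
    rw [polVecMul_fromBlocks_comp_inl, hE]
    exact Finset.sum_eq_zero fun i _ => zero_vecMul _
  rw [isInterpolant_iff_polVecMul_eq_zero, isInterpolant_iff_polVecMul_eq_zero,
    ← polVecMul_fromBlocks_comp_inr J₁ J' J₂ hE]
  refine ⟨fun h => h ▸ rfl, fun hinr => funext ?_⟩
  rintro (b | b)
  exacts [congrFun hinl b, congrFun hinr b]

end Blocks

lemma isInterpolant_fromBlocks_iff_exists_vecMul_mul {K : Type*} [Field K] {ι n₁ n₂ : Type*}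
    [Fintype ι] [DecidableEq ι] [Fintype n₁] [Fintype n₂] [DecidableEq n₁] [DecidableEq n₂]
    {J₁ : Matrix n₁ n₁ K} {J' : Matrix n₁ n₂ K} {J₂ : Matrix n₂ n₂ K}
    {E : Matrix ι (n₁ ⊕ n₂) K} {P₁ P₂ : Matrix ι ι K[X]}
    (h₁ : IsInterpolationBasis (E.submatrix id Sum.inl) J₁ P₁)
    (h₂ : IsInterpolationBasis
      ((polMulMat P₁ E (fromBlocks J₁ J' 0 J₂)).submatrix id Sum.inr) J₂ P₂)
    {p : ι → K[X]} :
    IsInterpolant E (fromBlocks J₁ J' 0 J₂) p ↔ ∃ w, w ᵥ* (P₂ * P₁) = p := by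
  have hresidual : (polMulMat P₁ E (fromBlocks J₁ J' 0 J₂)).submatrix id Sum.inl = 0 := by
    funext k
    have hk : IsInterpolant (E.submatrix id Sum.inl) J₁ (P₁ k) :=
      h₁.isInterpolant_iff.2 ⟨Pi.single k 1, single_one_vecMul _ _⟩
    exact (polVecMul_fromBlocks_comp_inl J₁ J' J₂ (P₁ k) E).trans hk
  have hcomb : ∀ v, IsInterpolant E (fromBlocks J₁ J' 0 J₂) (v ᵥ* P₁) ↔
      IsInterpolant ((polMulMat P₁ E (fromBlocks J₁ J' 0 J₂)).submatrix id Sum.inr) J₂ v :=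
    fun v => by
      rw [isInterpolant_iff_polVecMul_eq_zero, polVecMul_vecMul,
        ← isInterpolant_iff_polVecMul_eq_zero, isInterpolant_fromBlocks_iff hresidual]
  constructor
  · intro hp
    obtain ⟨v, rfl⟩ := h₁.isInterpolant_iff.1 hp.submatrix_inl
    obtain ⟨w, rfl⟩ := h₂.isInterpolant_iff.1 ((hcomb v).1 hp)
    exact ⟨w, (vecMul_vecMul _ _ _).symm⟩
  · rintro ⟨w, rfl⟩
    rw [← vecMul_vecMul]
    exact (hcomb _).2 (h₂.isInterpolant_iff.2 ⟨w, rfl⟩)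

theorem minimal_degree_from_recursive_calls_general {K : Type*} [Field K] {m σ1 σ2 : ℕ}
    (J1 : Matrix (Fin σ1) (Fin σ1) K) (J' : Matrix (Fin σ1) (Fin σ2) K)
    (J2 : Matrix (Fin σ2) (Fin σ2) K)
    (E : Matrix (Fin m) (Fin σ1 ⊕ Fin σ2) K) (s : Fin m → ℤ)
    (P1 P2 : Matrix (Fin m) (Fin m) (Polynomial K)) (δ1 δ2 : Fin m → ℕ)
    (h1basis : IsInterpolationBasis (E.submatrix id Sum.inl) J1 P1)
    (h1popov : IsPopov s P1) (h1δ : ∀ i, (P1 i i).natDegree = δ1 i)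
    (h2basis : IsInterpolationBasis
      ((polMulMat P1 E (Matrix.fromBlocks J1 J' 0 J2)).submatrix id Sum.inr) J2 P2)
    (h2popov : IsPopov (fun i => s i + (δ1 i : ℤ)) P2)
    (h2δ : ∀ i, (P2 i i).natDegree = δ2 i) :
    ∀ Q : Matrix (Fin m) (Fin m) (Polynomial K),
      IsInterpolationBasis E (Matrix.fromBlocks J1 J' 0 J2) Q → IsPopov s Q →
        ∀ i, (Q i i).natDegree = δ1 i + δ2 i := by
  intro Q hQbasis hQpopov i
  have hP1 : HasDiagonalPivots s (fun j => (δ1 j : ℤ)) P1 := by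
    simpa only [h1δ] using h1popov.hasDiagonalPivots
  have hP2 : HasDiagonalPivots (fun j => s j + (δ1 j : ℤ)) (fun j => (δ2 j : ℤ)) P2 := by
    simpa only [h2δ] using h2popov.hasDiagonalPivots
  have hrows : ∀ p, (∃ u, u ᵥ* Q = p) ↔ ∃ w, w ᵥ* (P2 * P1) = p := fun p =>
    hQbasis.isInterpolant_iff.symm.trans
      (isInterpolant_fromBlocks_iff_exists_vecMul_mul h1basis h2basis)
  have hdeg := congrFun (hQpopov.hasDiagonalPivots.pivotDegrees_eq (hP1.mul hP2) hrows) i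
  exact_mod_cast hdeg

/-- with `P1` an interpolation basis for `(E1, J1)` in `s`-Popov form with
column degree `δ1` and `P2` an interpolation basis for the residual `(E2, J2)` in
`(s+δ1)`-Popov form with column degree `δ2`, any interpolation basis for `(E, J)` in
`s`-Popov form has column degree `δ1 + δ2`. -/
theorem minimal_degree_from_recursive_calls {K : Type*} [Field K] {m σ1 σ2 : ℕ}
    (hm : 1 ≤ m) (h1 : 1 ≤ σ1) (h2 : 1 ≤ σ2)
    (J1 : Matrix (Fin σ1) (Fin σ1) K) (J' : Matrix (Fin σ1) (Fin σ2) K)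
    (J2 : Matrix (Fin σ2) (Fin σ2) K)
    (E : Matrix (Fin m) (Fin σ1 ⊕ Fin σ2) K) (s : Fin m → ℤ)
    (P1 P2 : Matrix (Fin m) (Fin m) (Polynomial K)) (δ1 δ2 : Fin m → ℕ)
    (h1basis : IsInterpolationBasis (E.submatrix id Sum.inl) J1 P1)
    (h1popov : IsPopov s P1) (h1δ : ∀ i, (P1 i i).natDegree = δ1 i)
    (h2basis : IsInterpolationBasis
      ((polMulMat P1 E (Matrix.fromBlocks J1 J' 0 J2)).submatrix id Sum.inr) J2 P2)
    (h2popov : IsPopov (fun i => s i + (δ1 i : ℤ)) P2)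
    (h2δ : ∀ i, (P2 i i).natDegree = δ2 i) :
    ∀ Q : Matrix (Fin m) (Fin m) (Polynomial K),
      IsInterpolationBasis E (Matrix.fromBlocks J1 J' 0 J2) Q → IsPopov s Q →
        ∀ i, (Q i i).natDegree = δ1 i + δ2 i :=
  minimal_degree_from_recursive_calls_general J1 J' J2 E s P1 P2 δ1 δ2 h1basis h1popov h1δ h2basis
    h2popov h2δ
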